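/- (Complexity in the strongly convex case.) In the subsampled spectral gradient setting with f_𝒩 strongly convex with constant c > 0 and unique minimizer x_*, if {ζₖ}, {νₖ}, {ηₖ} each converge to 0 R-linearly, then there exist ρ̂ ∈ (0,1) and Q > 0 such that for every ε ∈ (0, e⁻¹) there is an index k ≤ ⌈(log(f_𝒩(x₀) − f_𝒩(x_*) + Q) + 1)/|log ρ̂| · log(ε⁻¹) + 1⌉ with f_𝒩(xₖ) − f_𝒩(x_*) < ε. -/

import Mathlib

open scoped RealInnerProductSpace BigOperators

/-- A real sequence converges to 0 R-linearly if `|a k| ≤ M * q ^ k` for some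
`M > 0` and `q ∈ (0,1)`. -/
def RLinearTo0 (a : ℕ → ℝ) : Prop :=
  ∃ M > (0 : ℝ), ∃ q ∈ Set.Ioo (0 : ℝ) 1, ∀ k, |a k| ≤ M * q ^ k

section Aux

open InnerProductSpace Set Topology

variable {E : Type*} [NormedAddCommGroup E] [InnerProductSpace ℝ E] [CompleteSpace E]

lemma hasGradientAt_smul_sum' {ι : Type*} (s : Finset ι)
    (f : ι → E → ℝ) (g : ι → E) (a : ℝ) (x : E)
    (hf : ∀ j ∈ s, HasGradientAt (f j) (g j) x) :
    HasGradientAt (fun z => a * ∑ j ∈ s, f j z) (a • ∑ j ∈ s, g j) x := by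
  have h1 : HasFDerivAt (fun z => ∑ j ∈ s, f j z)
      (∑ j ∈ s, toDual ℝ E (g j)) x :=
    HasFDerivAt.fun_sum fun j hj => (hf j hj).hasFDerivAt
  have h2 := h1.const_mul a
  rw [hasGradientAt_iff_hasFDerivAt]
  convert h2 using 1
  all_goals first | rfl | simp [map_sum]

lemma hasGradientAt_sub' {f g : E → ℝ} {f' g' : E} {x : E}
    (hf : HasGradientAt f f' x) (hg : HasGradientAt g g' x) :
    HasGradientAt (fun z => f z - g z) (f' - g') x := by
  rw [hasGradientAt_iff_hasFDerivAt]
  have := hf.hasFDerivAt.sub hg.hasFDerivAt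
  convert this using 1
  all_goals first | rfl | simp

lemma convexOn_grad_ineq' {g : E → ℝ} (hg : ConvexOn ℝ Set.univ g) {x y gx : E}
    (h : HasGradientAt g gx x) : g x + ⟪gx, y - x⟫ ≤ g y := by
  have hline : HasDerivAt (fun t : ℝ => x + t • (y - x)) (y - x) 0 := by
    simpa using ((hasDerivAt_id (0:ℝ)).smul_const (y - x)).const_add x
  have h0 : x + (0:ℝ) • (y - x) = x := by simp
  have hF : HasFDerivAt g (toDual ℝ E gx) (x + (0:ℝ) • (y - x)) := by
    rw [h0]; exact h.hasFDerivAt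
  have hφ : HasDerivAt (fun t : ℝ => g (x + t • (y - x))) ⟪gx, y - x⟫ 0 := by
    have := hF.comp_hasDerivAt 0 hline
    simp only [toDual_apply_apply] at this
    exact this
  have hslope := hasDerivAt_iff_tendsto_slope.1 hφ
  have hmono : 𝓝[Set.Ioi (0:ℝ)] 0 ≤ 𝓝[{(0:ℝ)}ᶜ] 0 :=
    nhdsWithin_mono _ (fun t ht => ne_of_gt ht)
  have key : ⟪gx, y - x⟫ ≤ g y - g x := by
    refine le_of_tendsto (hslope.mono_left hmono) ?_
    filter_upwards [Ioc_mem_nhdsGT_of_mem (⟨le_rfl, zero_lt_one⟩ : (0:ℝ) ∈ Set.Ico 0 1)]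
      with t ht
    have ht0 : 0 < t := ht.1
    have ht1 : t ≤ 1 := ht.2
    have hcvx := hg.2 (Set.mem_univ x) (Set.mem_univ y)
      (by linarith : (0:ℝ) ≤ 1 - t) (le_of_lt ht0) (by ring)
    have hpt : (1 - t) • x + t • y = x + t • (y - x) := by module
    rw [hpt] at hcvx
    rw [slope_def_field]
    simp only [h0]
    rw [show t - (0:ℝ) = t by ring, div_le_iff₀ ht0]
    simp only [smul_eq_mul] at hcvx
    nlinarith [hcvx]
  linarith

lemma hasGradientAt_half_normSq' (cc : ℝ) (x : E) :
    HasGradientAt (fun z : E => cc / 2 * ‖z‖ ^ 2) (cc • x) x := by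
  rw [hasGradientAt_iff_isLittleO]
  have heq : ∀ y : E, cc / 2 * ‖y‖ ^ 2 - cc / 2 * ‖x‖ ^ 2 - ⟪cc • x, y - x⟫
      = cc / 2 * ‖y - x‖ ^ 2 := by
    intro y
    rw [real_inner_smul_left, inner_sub_right, real_inner_self_eq_norm_sq,
      real_inner_comm]
    have := norm_sub_sq_real y x
    linear_combination (-cc/2) * this
  simp only [heq]
  rw [Asymptotics.isLittleO_iff]
  intro ε hε
  have hδ : 0 < ε / (|cc| / 2 + 1) := by positivity
  filter_upwards [Metric.ball_mem_nhds x hδ] with y hy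
  rw [Metric.mem_ball, dist_eq_norm] at hy
  have h1 : ‖cc / 2 * ‖y - x‖ ^ 2‖ = |cc| / 2 * ‖y - x‖ ^ 2 := by
    rw [Real.norm_eq_abs, abs_mul, abs_of_nonneg (by positivity : (0:ℝ) ≤ ‖y - x‖ ^ 2),
      abs_div]
    norm_num
  rw [h1]
  have hn : (0:ℝ) ≤ ‖y - x‖ := norm_nonneg _
  have h2 : ‖y - x‖ < ε / (|cc| / 2 + 1) := hy
  have h3 : (0:ℝ) ≤ |cc| := abs_nonneg _
  rw [lt_div_iff₀ (by positivity)] at h2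
  nlinarith

lemma seq_complexity (a Er : ℕ → ℝ) (ρ₁ M q : ℝ)
    (hρ₁l : 1/2 ≤ ρ₁) (hρ₁u : ρ₁ < 1)
    (ha0 : ∀ k, 0 ≤ a k)
    (hrec : ∀ k, a (k+1) ≤ ρ₁ * a k + Er k)
    (hM : 0 < M) (hq0 : 0 < q) (hq1 : q < 1)
    (hE : ∀ k, Er k ≤ M * q ^ k) :
    ∃ ρ ∈ Set.Ioo (0:ℝ) 1, ∃ Q > (0:ℝ),
      ∀ ε ∈ Set.Ioo (0:ℝ) (Real.exp (-1)),
        ∃ k ≤ ⌈(Real.log (a 0 + Q) + 1) / |Real.log ρ| * Real.log ε⁻¹ + 1⌉₊,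
          a k < ε := by
  have hρ₁0 : (0:ℝ) < ρ₁ := lt_of_lt_of_le (by norm_num) hρ₁l
  set r : ℝ := max ρ₁ q with hrdef
  have hr0 : 0 < r := lt_of_lt_of_le hρ₁0 (le_max_left _ _)
  have hr1 : r < 1 := max_lt hρ₁u hq1
  set ρh : ℝ := (r+1)/2 with hρhdef
  have hρh0 : 0 < ρh := by rw [hρhdef]; linarith
  have hρh1 : ρh < 1 := by rw [hρhdef]; linarith
  have hrρh : r < ρh := by rw [hρhdef]; linarith
  have hρ₁ρh : ρ₁ < ρh := lt_of_le_of_lt (le_max_left _ _) hrρh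
  have hqρh : q ≤ ρh := le_trans (le_max_right _ _) hrρh.le
  set Q : ℝ := M / (ρh - ρ₁) + 1 with hQdef
  have hQdivpos : 0 < M / (ρh - ρ₁) := div_pos hM (by linarith)
  have hQpos : 0 < Q := by rw [hQdef]; linarith
  have hQ1 : 1 ≤ Q := by rw [hQdef]; linarith
  have hA1 : 1 ≤ a 0 + Q := by linarith [ha0 0]
  have hApos : 0 < a 0 + Q := by linarith
  have hMle : M ≤ (ρh - ρ₁) * (a 0 + Q) := by
    have h1 : M / (ρh - ρ₁) ≤ a 0 + Q := by
      rw [hQdef]; linarith [ha0 0]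
    rw [div_le_iff₀ (by linarith : (0:ℝ) < ρh - ρ₁)] at h1
    linarith [h1]
  have decay : ∀ k, a k ≤ (a 0 + Q) * ρh^k := by
    intro k
    induction k with
    | zero => simp; linarith
    | succ k ih =>
      have h1 := hrec k
      have h2 := hE k
      have hqρ : q ^ k ≤ ρh ^ k := pow_le_pow_left₀ hq0.le hqρh k
      have hpow : (0:ℝ) ≤ ρh ^ k := by positivity
      calc a (k+1) ≤ ρ₁ * a k + Er k := h1
        _ ≤ ρ₁ * ((a 0 + Q) * ρh^k) + M * ρh^k := by
            have e1 := mul_le_mul_of_nonneg_left ih hρ₁0.le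
            have e2 := mul_le_mul_of_nonneg_left hqρ hM.le
            linarith
        _ ≤ ρ₁ * ((a 0 + Q) * ρh^k) + ((ρh - ρ₁) * (a 0 + Q)) * ρh^k := by
            nlinarith [mul_le_mul_of_nonneg_right hMle hpow]
        _ = (a 0 + Q) * ρh^(k+1) := by ring
  refine ⟨ρh, ⟨hρh0, hρh1⟩, Q, hQpos, ?_⟩
  intro ε hε
  obtain ⟨hεp, hεe⟩ := hε
  refine ⟨⌈(Real.log (a 0 + Q) + 1) / |Real.log ρh| *
    Real.log ε⁻¹ + 1⌉₊, le_rfl, ?_⟩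
  set K : ℕ := ⌈(Real.log (a 0 + Q) + 1) / |Real.log ρh| *
    Real.log ε⁻¹ + 1⌉₊ with hKdef
  have hlogρ : Real.log ρh < 0 := Real.log_neg hρh0 hρh1
  have habs : |Real.log ρh| = -Real.log ρh := abs_of_neg hlogρ
  set l : ℝ := -Real.log ρh with hldef
  have hl0 : 0 < l := by rw [hldef]; linarith
  have ht : 1 < Real.log ε⁻¹ := by
    rw [Real.lt_log_iff_exp_lt (by positivity)]
    rw [Real.exp_neg] at hεe
    exact (lt_inv_comm₀ hεp (Real.exp_pos 1)).1 hεe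
  have hlogA : 0 ≤ Real.log (a 0 + Q) := Real.log_nonneg hA1
  set A' : ℝ := Real.log (a 0 + Q) with hA'def
  set t : ℝ := Real.log ε⁻¹ with htdef
  have hKge : (A' + 1)/l * t + 1 ≤ (K:ℝ) := by
    rw [hKdef, ← habs]
    exact Nat.le_ceil _
  have e1 : (A' + 1)/l * l = A' + 1 := div_mul_cancel₀ _ hl0.ne'
  have e3 : (A' + 1)/l * t * l = (A' + 1) * t := by
    rw [mul_right_comm, e1]
  have e2 := mul_le_mul_of_nonneg_right hKge hl0.le
  have h4 : 0 ≤ A' * (t - 1) := mul_nonneg hlogA (by linarith)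
  have key : A' + t < (K:ℝ) * l := by nlinarith [e2, e3]
  have hfinal : (a 0 + Q) * ρh^K < ε := by
    have hlt : Real.log ((a 0 + Q) * ρh^K) < Real.log ε := by
      rw [Real.log_mul hApos.ne' (by positivity : (0:ℝ) < ρh^K).ne',
        Real.log_pow, ← hA'def]
      have hlε : Real.log ε = -t := by
        rw [htdef, Real.log_inv]; ring
      have hlρ : Real.log ρh = -l := by rw [hldef]; ring
      rw [hlε, hlρ]
      have : (K:ℝ) * -l = -((K:ℝ) * l) := by ring
      linarith [key]
    exact (Real.log_lt_log_iff (by positivity) hεp).1 hlt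
  linarith [decay K]

end Aux

set_option maxHeartbeats 1000000 in
theorem subsampled_strongly_convex_complexity
    (n N : ℕ) (hn : 1 ≤ n) (hN : 1 ≤ N)
    (f : Fin N → EuclideanSpace ℝ (Fin n) → ℝ)
    (L : ℝ) (hL : 0 < L)
    (hfC1 : ∀ j, ContDiff ℝ 1 (f j))
    (hfLip : ∀ j u v, ‖gradient (f j) u - gradient (f j) v‖ ≤ L * ‖u - v‖)
    (fN : EuclideanSpace ℝ (Fin n) → ℝ)
    (hfN : ∀ z, fN z = (1 / (N : ℝ)) * ∑ j, f j z)
    (S : ℕ → Finset (Fin N)) (hS : ∀ k, (S k).Nonempty)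
    (fS : ℕ → EuclideanSpace ℝ (Fin n) → ℝ)
    (hfS : ∀ k z, fS k z = (1 / ((S k).card : ℝ)) * ∑ j ∈ S k, f j z)
    (x : ℕ → EuclideanSpace ℝ (Fin n))
    (α ζ σ : ℕ → ℝ)
    (σm σM : ℝ) (hσm : 0 < σm) (hσm1 : σm < 1) (hσM : 1 < σM)
    (hσ : ∀ k, σ k ∈ Set.Icc σm σM)
    (d : ℕ → EuclideanSpace ℝ (Fin n))
    (hd : ∀ k, d k = -(σ k)⁻¹ • gradient (fS k) (x k))
    (hx : ∀ k, x (k + 1) = x k + α k • d k)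
    (c₁ c₂ : ℝ) (hc₁ : 0 < c₁) (hc₁₂ : c₁ ≤ c₂) (hc₂ : c₂ < 1)
    (hα : ∀ k, 0 < α k) (hζ : ∀ k, 0 ≤ ζ k)
    (hArmijo : ∀ k, fS k (x k + α k • d k) ≤
      fS k (x k) + c₁ * α k * ⟪gradient (fS k) (x k), d k⟫ + ζ k)
    (hWolfe : ∀ k, ⟪gradient (fS k) (x k + α k • d k), d k⟫ ≥
      c₂ * ⟪gradient (fS k) (x k), d k⟫)
    (ν : ℕ → ℝ)
    (hν : ∀ k, ν k = max |fS k (x k) - fN (x k)| |fS k (x (k + 1)) - fN (x (k + 1))|)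
    (η : ℕ → ℝ)
    (hη : ∀ k, η k = max |‖gradient fN (x k)‖ ^ 2 - ‖gradient (fS k) (x k)‖ ^ 2|
      |‖gradient fN (x (k + 1))‖ ^ 2 - ‖gradient (fS k) (x (k + 1))‖ ^ 2|)
    (c : ℝ) (hc : 0 < c)
    (hconv : ConvexOn ℝ Set.univ (fun z => fN z - c / 2 * ‖z‖ ^ 2))
    (xstar : EuclideanSpace ℝ (Fin n)) (hmin : ∀ z, fN xstar ≤ fN z)
    (hζR : RLinearTo0 ζ) (hνR : RLinearTo0 ν) (hηR : RLinearTo0 η) :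
    ∃ ρ ∈ Set.Ioo (0 : ℝ) 1, ∃ Q > (0 : ℝ),
      ∀ ε ∈ Set.Ioo (0 : ℝ) (Real.exp (-1)), ∃ k ≤
        ⌈(Real.log (fN (x 0) - fN xstar + Q) + 1) / |Real.log ρ| *
          Real.log ε⁻¹ + 1⌉₊,
        fN (x k) - fN xstar < ε := by
  classical
  -- basic differentiability
  have hdiff : ∀ (j : Fin N) (z : EuclideanSpace ℝ (Fin n)),
      HasGradientAt (f j) (gradient (f j) z) z := fun j z =>
    (((hfC1 j).differentiable one_ne_zero) z).hasGradientAt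
  -- gradient of fS
  have hgS : ∀ k z, HasGradientAt (fS k)
      ((1 / ((S k).card : ℝ)) • ∑ j ∈ S k, gradient (f j) z) z := by
    intro k z
    have h := hasGradientAt_smul_sum' (S k) f (fun j => gradient (f j) z)
      (1 / ((S k).card : ℝ)) z (fun j _ => hdiff j z)
    exact h.congr_of_eventuallyEq (Filter.Eventually.of_forall fun w => hfS k w)
  have hgN : ∀ z, HasGradientAt fN
      ((1 / (N : ℝ)) • ∑ j, gradient (f j) z) z := by
    intro z
    have h := hasGradientAt_smul_sum' Finset.univ f (fun j => gradient (f j) z)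
      (1 / (N : ℝ)) z (fun j _ => hdiff j z)
    exact h.congr_of_eventuallyEq (Filter.Eventually.of_forall fun w => hfN w)
  -- Lipschitz property of the subsample gradients
  have hLipS : ∀ k u v,
      ‖gradient (fS k) u - gradient (fS k) v‖ ≤ L * ‖u - v‖ := by
    intro k u v
    rw [(hgS k u).gradient, (hgS k v).gradient]
    have hcard : (0:ℝ) < ((S k).card : ℝ) := by
      exact_mod_cast Finset.card_pos.2 (hS k)
    rw [← smul_sub, ← Finset.sum_sub_distrib, norm_smul]
    have hsum : ‖∑ j ∈ S k, (gradient (f j) u - gradient (f j) v)‖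
        ≤ ((S k).card : ℝ) * (L * ‖u - v‖) := by
      refine (norm_sum_le _ _).trans ?_
      have h := Finset.sum_le_card_nsmul (S k)
        (fun j => ‖gradient (f j) u - gradient (f j) v‖) (L * ‖u - v‖)
        (fun j _ => hfLip j u v)
      simpa [nsmul_eq_mul] using h
    have h1 : ‖(1 / ((S k).card : ℝ))‖ = ((S k).card : ℝ)⁻¹ := by
      rw [Real.norm_eq_abs, abs_of_pos (by positivity)]; simp
    rw [h1]
    calc ((S k).card:ℝ)⁻¹ * ‖∑ j ∈ S k, (gradient (f j) u - gradient (f j) v)‖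
        ≤ ((S k).card:ℝ)⁻¹ * (((S k).card : ℝ) * (L * ‖u - v‖)) :=
          mul_le_mul_of_nonneg_left hsum (by positivity)
      _ = L * ‖u - v‖ := by field_simp
  -- strong convexity consequence
  have hsc : ∀ z, 2 * c * (fN z - fN xstar) ≤ ‖gradient fN z‖ ^ 2 := by
    intro z
    set Gz := gradient fN z with hGz
    have hfNz : HasGradientAt fN Gz z := by
      rw [hGz, (hgN z).gradient]; exact hgN z
    have hsub : HasGradientAt (fun w => fN w - c / 2 * ‖w‖ ^ 2) (Gz - c • z) z :=
      hasGradientAt_sub' hfNz (hasGradientAt_half_normSq' c z)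
    have hineq := convexOn_grad_ineq' hconv (y := xstar) hsub
    have hexp : ⟪Gz - c • z, xstar - z⟫
        = ⟪Gz, xstar - z⟫ - c * ⟪z, xstar - z⟫ := by
      rw [inner_sub_left, real_inner_smul_left]
    have hid : ‖xstar - z‖ ^ 2 = ‖xstar‖ ^ 2 - 2 * ⟪z, xstar - z⟫ - ‖z‖ ^ 2 := by
      rw [inner_sub_right, real_inner_self_eq_norm_sq]
      have h1 := norm_sub_sq_real xstar z
      have h2 : ⟪xstar, z⟫ = ⟪z, xstar⟫ := real_inner_comm _ _
      linarith [h1, h2.ge, h2.le]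
    have hinner : -(‖Gz‖ * ‖xstar - z‖) ≤ ⟪Gz, xstar - z⟫ :=
      (abs_le.1 (abs_real_inner_le_norm Gz (xstar - z))).1
    have hnn : (0:ℝ) ≤ ‖xstar - z‖ := norm_nonneg _
    rw [hexp] at hineq
    have hid2 : c * ⟪z, xstar - z⟫
        = c/2 * ‖xstar‖^2 - c/2 * ‖z‖^2 - c/2 * ‖xstar - z‖^2 := by
      linear_combination (c/2) * hid
    have key1 : fN z + ⟪Gz, xstar - z⟫ + c/2 * ‖xstar - z‖^2 ≤ fN xstar := by
      linarith [hineq, hid2]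
    have key2 : fN z - fN xstar ≤ ‖Gz‖ * ‖xstar - z‖ - c/2 * ‖xstar - z‖^2 := by
      linarith [key1, hinner]
    nlinarith [sq_nonneg (‖Gz‖ - c * ‖xstar - z‖),
      mul_le_mul_of_nonneg_left key2 (by linarith : (0:ℝ) ≤ 2*c)]
  -- nonnegativity of errors
  have hν0 : ∀ k, 0 ≤ ν k := fun k => by
    rw [hν k]; exact le_trans (abs_nonneg _) (le_max_left _ _)
  have hη0 : ∀ k, 0 ≤ η k := fun k => by
    rw [hη k]; exact le_trans (abs_nonneg _) (le_max_left _ _)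
  have ha0 : ∀ k, (0:ℝ) ≤ fN (x k) - fN xstar := fun k => sub_nonneg.2 (hmin (x k))
  -- constants
  set β : ℝ := c₁ * (1 - c₂) / L with hβdef
  have hβ : 0 < β := div_pos (by nlinarith) hL
  set ρ₁ : ℝ := max (1 - 2 * c * β) (1/2) with hρ₁def
  have hρ₁l : (1:ℝ)/2 ≤ ρ₁ := le_max_right _ _
  have hρ₁u : ρ₁ < 1 := max_lt (by nlinarith) (by norm_num)
  have hρ₁0 : (0:ℝ) < ρ₁ := lt_of_lt_of_le (by norm_num) hρ₁l
  set Er : ℕ → ℝ := fun k => ζ k + 2 * ν k + β * η k + η k / (2*c) with hErdef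
  -- the key recursion
  have hrec : ∀ k, fN (x (k+1)) - fN xstar
      ≤ ρ₁ * (fN (x k) - fN xstar) + Er k := by
    intro k
    obtain ⟨hσ1, hσ2⟩ := hσ k
    have hσpos : 0 < σ k := lt_of_lt_of_le hσm hσ1
    set g := gradient (fS k) (x k) with hgdef
    have hdk : d k = -(σ k)⁻¹ • g := hd k
    have hip : ⟪g, d k⟫ = -((σ k)⁻¹ * ‖g‖^2) := by
      rw [hdk]
      rw [real_inner_smul_right, real_inner_self_eq_norm_sq]
      ring
    have hnd : ‖d k‖ = (σ k)⁻¹ * ‖g‖ := by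
      rw [hdk, norm_smul, Real.norm_eq_abs, abs_neg,
        abs_of_pos (inv_pos.2 hσpos)]
    have hη1 : ‖gradient fN (x k)‖^2 - ‖g‖^2 ≤ η k := by
      rw [hη k]; exact le_trans (le_abs_self _) (le_max_left _ _)
    have hν1 : fS k (x k) - fN (x k) ≤ ν k := by
      rw [hν k]; exact le_trans (le_abs_self _) (le_max_left _ _)
    have hν2 : fN (x (k+1)) - fS k (x (k+1)) ≤ ν k := by
      rw [hν k]
      exact le_trans (le_trans (le_abs_self _)
        (le_of_eq (abs_sub_comm _ _))) (le_max_right _ _)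
    have hSC := hsc (x k)
    have hζk := hζ k
    have hηdiv : 0 ≤ η k / (2*c) := div_nonneg (hη0 k) (by linarith)
    have hρ₁ge : 1 - 2*c*β ≤ ρ₁ := le_max_left _ _
    have hmul : (1 - 2*c*β) * (fN (x k) - fN xstar)
        ≤ ρ₁ * (fN (x k) - fN xstar) :=
      mul_le_mul_of_nonneg_right hρ₁ge (ha0 k)
    by_cases hg0 : g = 0
    · have hx1 : x (k+1) = x k := by
        rw [hx k, hdk, hg0]; simp
      have h2ca : 2*c*(fN (x k) - fN xstar) ≤ η k := by
        rw [hg0] at hη1; simp at hη1; linarith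
      rw [hx1]
      have hβ0 : 0 ≤ β * η k := mul_nonneg hβ.le (hη0 k)
      have hle : (0:ℝ) ≤ ρ₁ * (fN (x k) - fN xstar) :=
        mul_nonneg hρ₁0.le (ha0 k)
      have hak : fN (x k) - fN xstar ≤ η k / (2*c) := by
        rw [le_div_iff₀ (by positivity)]; linarith
      have hrle : (1/2) * (fN (x k) - fN xstar) ≤ ρ₁ * (fN (x k) - fN xstar) :=
        mul_le_mul_of_nonneg_right hρ₁l (ha0 k)
      simp only [hErdef]
      linarith [hν0 k]
    · have hgn : 0 < ‖g‖ := norm_pos_iff.2 hg0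
      have hG2 : 0 < ‖g‖^2 := by positivity
      have hu : (0:ℝ) < (σ k)⁻¹ := inv_pos.2 hσpos
      have huσ : (σ k)⁻¹ * σ k = 1 := inv_mul_cancel₀ hσpos.ne'
      have hW := hWolfe k
      have hLip1 : ‖gradient (fS k) (x k + α k • d k) - g‖
          ≤ L * (α k * ‖d k‖) := by
        have h := hLipS k (x k + α k • d k) (x k)
        calc ‖gradient (fS k) (x k + α k • d k) - g‖
            ≤ L * ‖x k + α k • d k - x k‖ := h
          _ = L * (α k * ‖d k‖) := by
              rw [add_sub_cancel_left, norm_smul, Real.norm_eq_abs,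
                abs_of_pos (hα k)]
      have hIub : ⟪gradient (fS k) (x k + α k • d k) - g, d k⟫
          ≤ (L * (α k * ‖d k‖)) * ‖d k‖ :=
        le_trans (real_inner_le_norm _ _)
          (mul_le_mul_of_nonneg_right hLip1 (norm_nonneg _))
      have hIlb : (1 - c₂) * ((σ k)⁻¹ * ‖g‖^2)
          ≤ ⟪gradient (fS k) (x k + α k • d k) - g, d k⟫ := by
        rw [inner_sub_left]
        rw [hip] at hW ⊢
        linarith [hW]
      have hkey : (1 - c₂) * ((σ k)⁻¹ * ‖g‖^2)
          ≤ L * α k * ((σ k)⁻¹ * ‖g‖)^2 := by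
        have h := le_trans hIlb hIub
        rw [hnd] at h
        nlinarith [h]
      have hαlb : β ≤ c₁ * (α k * (σ k)⁻¹) := by
        rw [hβdef, div_le_iff₀ hL]
        have h1 : (1 - c₂) * (σ k)⁻¹ ≤ L * α k * ((σ k)⁻¹)^2 := by
          rw [mul_pow] at hkey
          refine le_of_mul_le_mul_right ?_ hG2
          nlinarith [hkey]
        have h3 := mul_le_mul_of_nonneg_right h1 hσpos.le
        have h2 : (1 - c₂) ≤ L * α k * (σ k)⁻¹ := by
          calc (1-c₂) = (1-c₂) * ((σ k)⁻¹ * σ k) := by rw [huσ]; ring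
            _ ≤ L * α k * ((σ k)⁻¹)^2 * σ k := by nlinarith [h3]
            _ = L * α k * (σ k)⁻¹ * ((σ k)⁻¹ * σ k) := by ring
            _ = L * α k * (σ k)⁻¹ := by rw [huσ]; ring
        nlinarith [mul_le_mul_of_nonneg_left h2 hc₁.le]
      have hA := hArmijo k
      rw [hip] at hA
      have hstep : fS k (x k + α k • d k) ≤ fS k (x k) - β * ‖g‖^2 + ζ k := by
        have h4 := mul_le_mul_of_nonneg_right hαlb (sq_nonneg ‖g‖)
        linarith [hA, h4]
      have hβη : β * (2*c*(fN (x k) - fN xstar) - η k) ≤ β * ‖g‖^2 :=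
        mul_le_mul_of_nonneg_left (by linarith [hSC, hη1]) hβ.le
      have hx1 := hx k
      rw [hx1] at hν2 ⊢
      simp only [hErdef]
      linarith [hmul, hβη, hstep, hν1, hν2, hζk, hηdiv]
  -- combine the three R-linear error sequences
  obtain ⟨Mζ, hMζ, qζ, hqζ, hbζ⟩ := hζR
  obtain ⟨Mν, hMν, qν, hqν, hbν⟩ := hνR
  obtain ⟨Mη, hMη, qη, hqη, hbη⟩ := hηR
  set q : ℝ := max qζ (max qν qη) with hqdef
  have hq0 : 0 < q := lt_of_lt_of_le hqζ.1 (le_max_left _ _)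
  have hq1 : q < 1 := max_lt hqζ.2 (max_lt hqν.2 hqη.2)
  have hβc : 0 < β + 1/(2*c) := by positivity
  set M : ℝ := Mζ + 2*Mν + (β + 1/(2*c)) * Mη with hMdef
  have hM : 0 < M := by
    have h := mul_pos hβc hMη
    rw [hMdef]; nlinarith [h]
  have hE : ∀ k, Er k ≤ M * q^k := by
    intro k
    have hpζ : qζ^k ≤ q^k := pow_le_pow_left₀ hqζ.1.le (le_max_left _ _) k
    have hpν : qν^k ≤ q^k :=
      pow_le_pow_left₀ hqν.1.le (le_trans (le_max_left _ _) (le_max_right _ _)) k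
    have hpη : qη^k ≤ q^k :=
      pow_le_pow_left₀ hqη.1.le (le_trans (le_max_right _ _) (le_max_right _ _)) k
    have h1 : ζ k ≤ Mζ * q^k :=
      le_trans (le_abs_self _) (le_trans (hbζ k)
        (mul_le_mul_of_nonneg_left hpζ hMζ.le))
    have h2 : ν k ≤ Mν * q^k :=
      le_trans (le_abs_self _) (le_trans (hbν k)
        (mul_le_mul_of_nonneg_left hpν hMν.le))
    have h3 : η k ≤ Mη * q^k :=
      le_trans (le_abs_self _) (le_trans (hbη k)
        (mul_le_mul_of_nonneg_left hpη hMη.le))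
    have h4 : (β + 1/(2*c)) * η k ≤ (β + 1/(2*c)) * (Mη * q^k) :=
      mul_le_mul_of_nonneg_left h3 hβc.le
    simp only [hErdef, hMdef]
    have h5 : β * η k + η k / (2*c) = (β + 1/(2*c)) * η k := by
      field_simp
    nlinarith
  exact seq_complexity (fun k => fN (x k) - fN xstar) Er ρ₁ M q
    hρ₁l hρ₁u ha0 hrec hM hq0 hq1 hE
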